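/- For all 0 < t ≤ 1, the function ρ_t is locally Euclidean on ℝ³: for every P ∈ ℝ³ and all Q, R in the ball B_t(P) = {S ∈ ℝ³ | ρ_t(P,S) < t}, one has ρ_t(Q,R) = d_E(Q,R). -/

import Mathlib

noncomputable section

/-- The unit 2-sphere in `ℝ³`, i.e. in `EuclideanSpace ℝ (Fin 3)`. -/
def S2 : Set (EuclideanSpace ℝ (Fin 3)) := Metric.sphere (0 : EuclideanSpace ℝ (Fin 3)) 1

/-- The angle parameter `α = arcsin ((√(2 - t²) - t) / 2)`. -/
def alphaAngle (t : ℝ) : ℝ := Real.arcsin ((Real.sqrt (2 - t ^ 2) - t) / 2)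

/-- The metric `d_t` on the unit sphere: `d_t(P,Q) = d_E(P,Q)` if `∠POQ ≤ π - 2α`,
and `d_t(P,Q) = 2t + d_E(-P,Q)` otherwise. -/
def dt (t : ℝ) (P Q : EuclideanSpace ℝ (Fin 3)) : ℝ :=
  if EuclideanGeometry.angle P (0 : EuclideanSpace ℝ (Fin 3)) Q ≤ Real.pi - 2 * alphaAngle t
  then dist P Q
  else 2 * t + dist (-P) Q

/-- A point on the unit sphere at Euclidean distance `r` (for `0 ≤ r ≤ 2`) from the
base point `spherePt 0 = (1,0,0)`. -/
def spherePt (r : ℝ) : EuclideanSpace ℝ (Fin 3) :=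
  (WithLp.equiv 2 (Fin 3 → ℝ)).symm ![1 - r ^ 2 / 2, r * Real.sqrt (1 - r ^ 2 / 4), 0]

/-- The value `d_t(ε⁻¹(X), ε⁻¹(Y))` for points `X, Y ∈ ℝ³` with `d_E(X,Y) ≤ 2`, computed
via the concrete pair of unit-sphere points `spherePt 0`, `spherePt (d_E(X,Y))` at the same
Euclidean distance; by invariance of `d_t` under Euclidean isometries this agrees with the
value obtained from any isometric embedding `ε : S² → ℝ³` whose image contains `X` and `Y`. -/
def dtChord (t r : ℝ) : ℝ := dt t (spherePt 0) (spherePt r)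

/-- The set of values `∑_{i=1}^n d_t(X_{i-1}, X_i)` over all chains
`(X_0, …, X_n) ∈ Γ_{P,Q}`, i.e. chains from `P` to `Q` with all steps of Euclidean
length at most `2`. -/
def chainSums (t : ℝ) (P Q : EuclideanSpace ℝ (Fin 3)) : Set ℝ :=
  { s : ℝ | ∃ n : ℕ, ∃ X : Fin (n + 1) → EuclideanSpace ℝ (Fin 3),
      X 0 = P ∧ X (Fin.last n) = Q ∧
      (∀ i : Fin n, dist (X i.castSucc) (X i.succ) ≤ 2) ∧
      s = ∑ i : Fin n, dtChord t (dist (X i.castSucc) (X i.succ)) }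

/-- The metric `ρ_t(P,Q) = inf { ∑_{i=1}^n d_t(X_{i-1},X_i) | (X_0,…,X_n) ∈ Γ_{P,Q} }`. -/
def rho (t : ℝ) (P Q : EuclideanSpace ℝ (Fin 3)) : ℝ := sInf (chainSums t P Q)

lemma spherePt_apply (r : ℝ) (i : Fin 3) :
    spherePt r i = ![1 - r ^ 2 / 2, r * Real.sqrt (1 - r ^ 2 / 4), 0] i := rfl

lemma dist_spherePt (r : ℝ) (hr0 : 0 ≤ r) (hr2 : r ≤ 2) :
    dist (spherePt 0) (spherePt r) = r := by
  have h4 : (0:ℝ) ≤ 1 - r ^ 2 / 4 := by nlinarith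
  have hs : Real.sqrt (1 - r ^ 2 / 4) ^ 2 = 1 - r ^ 2 / 4 := Real.sq_sqrt h4
  rw [EuclideanSpace.dist_eq]
  simp only [spherePt_apply, Fin.sum_univ_three]
  simp only [Matrix.cons_val_zero, Matrix.cons_val_one, Matrix.head_cons,
    Matrix.cons_val_two, Matrix.tail_cons, Real.dist_eq]
  rw [show |1 - 0 ^ 2 / 2 - (1 - r ^ 2 / 2)| ^ 2 = (r^2/2)^2 by rw [sq_abs]; ring_nf]
  rw [show |0 * Real.sqrt (1 - 0 ^ 2 / 4) - r * Real.sqrt (1 - r ^ 2 / 4)| ^ 2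
      = r ^ 2 * (1 - r ^ 2 / 4) by rw [sq_abs]; rw [zero_mul, zero_sub, neg_sq, mul_pow, hs]]
  rw [show (r^2/2)^2 + r ^ 2 * (1 - r^2/4) + |(0:ℝ)-0|^2 = r^2 by simp; ring]
  exact Real.sqrt_sq hr0

lemma norm_spherePt (r : ℝ) (hr0 : 0 ≤ r) (hr2 : r ≤ 2) : ‖spherePt r‖ = 1 := by
  have h4 : (0:ℝ) ≤ 1 - r ^ 2 / 4 := by nlinarith
  have hs : Real.sqrt (1 - r ^ 2 / 4) ^ 2 = 1 - r ^ 2 / 4 := Real.sq_sqrt h4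
  rw [EuclideanSpace.norm_eq]
  simp only [spherePt_apply, Fin.sum_univ_three, Matrix.cons_val_zero, Matrix.cons_val_one,
    Matrix.head_cons, Matrix.cons_val_two, Matrix.tail_cons, Real.norm_eq_abs, sq_abs]
  rw [mul_pow, hs, show (1 - r ^ 2 / 2) ^ 2 + r ^ 2 * (1 - r ^ 2 / 4) + 0 ^ 2 = 1 by ring]
  exact Real.sqrt_one

lemma inner_spherePt (r : ℝ) :
    (inner ℝ (spherePt 0) (spherePt r) : ℝ) = 1 - r ^ 2 / 2 := by
  rw [PiLp.inner_apply]
  simp only [spherePt_apply, Fin.sum_univ_three, Matrix.cons_val_zero, Matrix.cons_val_one,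
    Matrix.head_cons, Matrix.cons_val_two, Matrix.tail_cons, RCLike.inner_apply, conj_trivial]
  ring_nf

lemma angle_spherePt (r : ℝ) (hr0 : 0 ≤ r) (hr2 : r ≤ 2) :
    EuclideanGeometry.angle (spherePt 0) (0 : EuclideanSpace ℝ (Fin 3)) (spherePt r)
      = Real.arccos (1 - r ^ 2 / 2) := by
  rw [EuclideanGeometry.angle, InnerProductGeometry.angle]
  simp only [vsub_eq_sub, sub_zero]
  rw [inner_spherePt r, norm_spherePt 0 le_rfl (by norm_num), norm_spherePt r hr0 hr2]
  norm_num

lemma arccos_le_arccos' {x y : ℝ} (h1 : -1 ≤ x) (h2 : x ≤ y) :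
    Real.arccos y ≤ Real.arccos x := by
  rw [Real.arccos_eq_pi_div_two_sub_arcsin, Real.arccos_eq_pi_div_two_sub_arcsin]
  have := Real.monotone_arcsin h2
  linarith

-- properties of alpha
lemma sqrt_two_sub_sq_ge (t : ℝ) (ht0 : 0 < t) (ht1 : t ≤ 1) : t ≤ Real.sqrt (2 - t ^ 2) := by
  rw [show (2:ℝ) - t^2 = t^2 + (2 - 2*t^2) by ring]
  nlinarith [Real.sqrt_le_sqrt (show t^2 ≤ t^2 + (2-2*t^2) by nlinarith), Real.sqrt_sq ht0.le]

lemma cond_holds (t r : ℝ) (ht0 : 0 < t) (ht1 : t ≤ 1) (hr0 : 0 ≤ r) (hr : r ≤ 2 * t) :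
    EuclideanGeometry.angle (spherePt 0) (0 : EuclideanSpace ℝ (Fin 3)) (spherePt r)
      ≤ Real.pi - 2 * alphaAngle t := by
  have hu0 : (0:ℝ) ≤ Real.sqrt (2 - t ^ 2) := Real.sqrt_nonneg _
  have hu2 : Real.sqrt (2 - t ^ 2) ^ 2 = 2 - t ^ 2 := Real.sq_sqrt (by nlinarith)
  have hut : t ≤ Real.sqrt (2 - t ^ 2) := sqrt_two_sub_sq_ge t ht0 ht1
  set u := Real.sqrt (2 - t ^ 2) with hu
  have hu1 : u ≤ 2 := by nlinarith
  -- the sine value s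
  set s := (u - t) / 2 with hs
  have hs0 : 0 ≤ s := by simp only [hs]; linarith
  have hs1 : s ≤ 1 := by simp only [hs]; nlinarith
  have hsin : Real.sin (alphaAngle t) = s := Real.sin_arcsin (by linarith) hs1
  have hα0 : 0 ≤ alphaAngle t := Real.arcsin_nonneg.2 hs0
  have hα2 : alphaAngle t ≤ Real.pi / 2 := Real.arcsin_le_pi_div_two _
  -- cos (π - 2α) = -(t*u)
  have hcos : Real.cos (Real.pi - 2 * alphaAngle t) = -(t * u) := by
    rw [Real.cos_pi_sub, Real.cos_two_mul, Real.cos_sq', hsin]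
    simp only [hs]
    nlinarith
  have hπ : Real.arccos (-(t * u)) = Real.pi - 2 * alphaAngle t := by
    refine Real.arccos_eq_of_eq_cos (by linarith) (by nlinarith [Real.pi_pos]) hcos.symm
  rw [angle_spherePt r hr0 (by linarith), ← hπ]
  refine arccos_le_arccos' ?_ ?_
  · nlinarith [sq_nonneg (t*u - 1), mul_nonneg ht0.le hu0, sq_nonneg (1 - t^2)]
  · nlinarith [mul_le_mul_of_nonneg_left hut ht0.le]

lemma mem_chainSums_iff {t : ℝ} {P Q : EuclideanSpace ℝ (Fin 3)} {s : ℝ} :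
    s ∈ chainSums t P Q ↔ ∃ n : ℕ, ∃ f : ℕ → EuclideanSpace ℝ (Fin 3),
      f 0 = P ∧ f n = Q ∧ (∀ i < n, dist (f i) (f (i + 1)) ≤ 2) ∧
      s = ∑ i ∈ Finset.range n, dtChord t (dist (f i) (f (i + 1))) := by
  constructor
  · rintro ⟨n, X, h0, hl, hstep, hsum⟩
    refine ⟨n, fun k => X ⟨min k n, by omega⟩, ?_, ?_, ?_, ?_⟩
    · simpa using congrArg X (by ext; simp : (⟨min 0 n, by omega⟩ : Fin (n+1)) = 0) |>.trans h0
    · simpa using congrArg X (by ext; simp [Fin.last] : (⟨min n n, by omega⟩ : Fin (n+1)) = Fin.last n) |>.trans hl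
    · intro i hi
      have h1 : (⟨min i n, by omega⟩ : Fin (n+1)) = (⟨i, by omega⟩ : Fin n).castSucc := by
        ext; simp [Fin.castSucc]; omega
      have h2 : (⟨min (i+1) n, by omega⟩ : Fin (n+1)) = (⟨i, by omega⟩ : Fin n).succ := by
        ext; simp [Fin.succ]; omega
      simp only [h1, h2]; exact hstep _
    · rw [hsum, ← Fin.sum_univ_eq_sum_range
        (fun k => dtChord t (dist (X ⟨min k n, by omega⟩) (X ⟨min (k+1) n, by omega⟩))) n]
      refine Finset.sum_congr rfl fun i _ => ?_
      have hi := i.isLt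
      congr 2
      · exact congrArg X (Fin.ext (by simp only [Fin.coe_castSucc]; omega))
      · exact congrArg X (Fin.ext (by simp only [Fin.val_succ]; omega))
  · rintro ⟨n, f, h0, hl, hstep, hsum⟩
    refine ⟨n, fun i => f i.val, h0, hl, fun i => hstep i.val i.isLt, ?_⟩
    rw [hsum, ← Fin.sum_univ_eq_sum_range (fun k => dtChord t (dist (f k) (f (k+1)))) n]
    rfl


lemma chainSums_symm {t : ℝ} {P Q : EuclideanSpace ℝ (Fin 3)} {s : ℝ}
    (h : s ∈ chainSums t P Q) : s ∈ chainSums t Q P := by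
  rw [mem_chainSums_iff] at h ⊢
  obtain ⟨n, f, h0, hl, hstep, hsum⟩ := h
  refine ⟨n, fun k => f (n - k), by simp [hl], by simp [h0], ?_, ?_⟩
  · intro i hi
    beta_reduce
    have e : n - i = (n - (i+1)) + 1 := by omega
    rw [e, dist_comm]
    exact hstep _ (by omega)
  · rw [hsum, ← Finset.sum_range_reflect (fun k => dtChord t (dist (f k) (f (k+1)))) n]
    refine Finset.sum_congr rfl fun i hi => ?_
    simp only [Finset.mem_range] at hi
    beta_reduce
    have e1 : n - i = (n - 1 - i) + 1 := by omega
    have e2 : n - (i+1) = n - 1 - i := by omega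
    rw [e1, e2, dist_comm]

lemma chainSums_trans {t : ℝ} {P Q R : EuclideanSpace ℝ (Fin 3)} {s₁ s₂ : ℝ}
    (h₁ : s₁ ∈ chainSums t P Q) (h₂ : s₂ ∈ chainSums t Q R) :
    s₁ + s₂ ∈ chainSums t P R := by
  rw [mem_chainSums_iff] at h₁ h₂ ⊢
  obtain ⟨n, f, hf0, hfl, hfstep, hfsum⟩ := h₁
  obtain ⟨m, g, hg0, hgl, hgstep, hgsum⟩ := h₂
  refine ⟨n + m, fun k => if k < n then f k else g (k - n), ?_, ?_, ?_, ?_⟩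
  · beta_reduce
    by_cases h : 0 < n
    · rw [if_pos h]; exact hf0
    · have hn0 : n = 0 := by omega
      rw [if_neg (by omega)]
      rw [show (0:ℕ) - n = 0 by omega, hg0, ← hfl, hn0, hf0]
  · beta_reduce
    rw [if_neg (by omega), show n + m - n = m by omega, hgl]
  · intro i hi
    beta_reduce
    by_cases h1 : i < n
    · by_cases h2 : i + 1 < n
      · rw [if_pos h1, if_pos h2]; exact hfstep i h1
      · have e : i + 1 = n := by omega
        rw [if_pos h1, if_neg h2, show i + 1 - n = 0 by omega, hg0, ← hfl, ← e]
        exact hfstep i h1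
    · rw [if_neg h1, if_neg (show ¬ (i + 1 < n) by omega),
        show i + 1 - n = (i - n) + 1 by omega]
      exact hgstep (i - n) (by omega)
  · rw [hfsum, hgsum, Finset.sum_range_add]
    congr 1
    · refine Finset.sum_congr rfl fun i hi => ?_
      simp only [Finset.mem_range] at hi
      beta_reduce
      by_cases h2 : i + 1 < n
      · rw [if_pos hi, if_pos h2]
      · have e : i + 1 = n := by omega
        rw [if_pos hi, if_neg h2, show i + 1 - n = 0 by omega, hg0, ← hfl, ← e]
    · refine Finset.sum_congr rfl fun i hi => ?_
      beta_reduce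
      rw [if_neg (by omega : ¬ (n + i < n)), if_neg (by omega : ¬ (n + i + 1 < n)),
        show n + i - n = i by omega, show n + i + 1 - n = i + 1 by omega]

lemma chainSums_nonempty (t : ℝ) (P Q : EuclideanSpace ℝ (Fin 3)) :
    (chainSums t P Q).Nonempty := by
  obtain ⟨n, hnpos, hd2⟩ : ∃ n : ℕ, (0:ℝ) < n ∧ dist P Q ≤ 2 * n := by
    refine ⟨⌊dist P Q / 2⌋₊ + 1, by positivity, ?_⟩
    have h1 := Nat.lt_floor_add_one (dist P Q / 2)
    push_cast
    linarith
  refine ⟨_, mem_chainSums_iff.2 ⟨n, fun k => P + ((k:ℝ) / n) • (Q - P), by simp, ?_, ?_, rfl⟩⟩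
  · beta_reduce
    rw [div_self (ne_of_gt hnpos), one_smul]
    abel
  · intro i hi
    beta_reduce
    rw [dist_add_left, dist_eq_norm, ← sub_smul, norm_smul]
    push_cast
    rw [show (i:ℝ)/n - ((i:ℝ)+1)/n = -(1/n) by field_simp; ring]
    rw [norm_neg, ← dist_eq_norm', Real.norm_eq_abs, abs_of_pos (by positivity)]
    calc 1/(n:ℝ) * dist P Q ≤ 1/(n:ℝ) * (2*n) :=
          mul_le_mul_of_nonneg_left hd2 (by positivity)
      _ = 2 := by field_simp

lemma dtChord_nonneg {t : ℝ} (ht : 0 < t) (r : ℝ) : 0 ≤ dtChord t r := by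
  unfold dtChord dt
  split_ifs
  · exact dist_nonneg
  · linarith [dist_nonneg (x := -spherePt 0) (y := spherePt r)]

lemma chainSums_bddBelow (t : ℝ) (ht : 0 < t) (P Q : EuclideanSpace ℝ (Fin 3)) :
    BddBelow (chainSums t P Q) := by
  refine ⟨0, fun s hs => ?_⟩
  obtain ⟨n, X, _, _, _, hsum⟩ := hs
  rw [hsum]
  exact Finset.sum_nonneg fun i _ => dtChord_nonneg ht _

lemma dtChord_small {t r : ℝ} (ht0 : 0 < t) (ht1 : t ≤ 1) (hr0 : 0 ≤ r) (hr : r ≤ 2 * t) :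
    dtChord t r = r := by
  unfold dtChord dt
  rw [if_pos (cond_holds t r ht0 ht1 hr0 hr)]
  exact dist_spherePt r hr0 (by linarith)

lemma dtChord_cases {t r : ℝ} (hr0 : 0 ≤ r) (hr2 : r ≤ 2) :
    dtChord t r = r ∨ 2 * t ≤ dtChord t r := by
  unfold dtChord dt
  split_ifs with h
  · left; exact dist_spherePt r hr0 hr2
  · right; linarith [dist_nonneg (x := -spherePt 0) (y := spherePt r)]

lemma sum_lower {t s : ℝ} {Q R : EuclideanSpace ℝ (Fin 3)} (ht0 : 0 < t)
    (hs : s ∈ chainSums t Q R) : min (2 * t) (dist Q R) ≤ s := by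
  rw [mem_chainSums_iff] at hs
  obtain ⟨n, f, h0, hl, hstep, hsum⟩ := hs
  by_cases hall : ∀ i < n, dtChord t (dist (f i) (f (i + 1))) = dist (f i) (f (i + 1))
  · refine le_trans (min_le_right _ _) ?_
    rw [hsum]
    calc dist Q R = dist (f 0) (f n) := by rw [h0, hl]
      _ ≤ ∑ i ∈ Finset.range n, dist (f i) (f (i + 1)) := dist_le_range_sum_dist f n
      _ = ∑ i ∈ Finset.range n, dtChord t (dist (f i) (f (i + 1))) :=
          (Finset.sum_congr rfl fun i hi => (hall i (Finset.mem_range.1 hi)).symm)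
  · push_neg at hall
    obtain ⟨i₀, hi₀n, hne⟩ := hall
    have h2t : 2 * t ≤ dtChord t (dist (f i₀) (f (i₀ + 1))) :=
      (dtChord_cases dist_nonneg (hstep _ hi₀n)).resolve_left hne
    refine le_trans (min_le_left _ _) ?_
    rw [hsum]
    refine h2t.trans (Finset.single_le_sum
      (f := fun i => dtChord t (dist (f i) (f (i + 1))))
      (fun i _ => dtChord_nonneg ht0 _) (Finset.mem_range.2 hi₀n))

theorem rho_locally_euclidean (t : ℝ) (ht0 : 0 < t) (ht1 : t ≤ 1)
    (P Q R : EuclideanSpace ℝ (Fin 3))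
    (hQ : rho t P Q < t) (hR : rho t P R < t) :
    rho t Q R = dist Q R := by
  obtain ⟨s₁, hs₁, hs₁t⟩ := exists_lt_of_csInf_lt (chainSums_nonempty t P Q) hQ
  obtain ⟨s₂, hs₂, hs₂t⟩ := exists_lt_of_csInf_lt (chainSums_nonempty t P R) hR
  have hmem : s₁ + s₂ ∈ chainSums t Q R := chainSums_trans (chainSums_symm hs₁) hs₂
  have hub : rho t Q R ≤ s₁ + s₂ := csInf_le (chainSums_bddBelow t ht0 Q R) hmem
  have hlb : min (2 * t) (dist Q R) ≤ rho t Q R :=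
    le_csInf ⟨_, hmem⟩ fun s hs => sum_lower ht0 hs
  have hd2t : dist Q R ≤ 2 * t := by
    by_contra h
    push_neg at h
    rw [min_eq_left h.le] at hlb
    linarith
  have hge : dist Q R ≤ rho t Q R := by
    rw [min_eq_right hd2t] at hlb; exact hlb
  have hmem1 : dist Q R ∈ chainSums t Q R := by
    rw [mem_chainSums_iff]
    refine ⟨1, fun k => if k = 0 then Q else R, by simp, by simp, ?_, ?_⟩
    · intro i hi
      interval_cases i
      simpa using hd2t.trans (by linarith)
    · rw [Finset.sum_range_one]
      beta_reduce
      norm_num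
      exact (dtChord_small ht0 ht1 dist_nonneg hd2t).symm
  have hle : rho t Q R ≤ dist Q R := csInf_le (chainSums_bddBelow t ht0 Q R) hmem1
  linarith
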